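/- For every real t ≥ 0 and every real r with 0 ≤ r < 1, the double series with nonnegative terms Σ_{m,n≥0} t^m·Surj(n,m)·(−log(1−r))^n/n! converges if and only if r < 1/(t+1), and when it converges its sum equals (1−r)/(1−(t+1)r). -/

import Mathlib

/-- `Surj n m` is the number of surjective functions from `Fin n` to `Fin m`. -/
noncomputable def Surj (n m : ℕ) : ℕ :=
  Nat.card {f : Fin n → Fin m // Function.Surjective f}

/-!
Grouping the maps `Fin n → Fin m` by their image gives `m ^ n = ∑ₖ C(m, k) Surj(n, k)`.
Comparing `exp (m x) = ((exp x - 1) + 1) ^ m` with this identity summed against `xⁿ / n!`,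
binomial inversion yields the exponential generating function
`∑ₙ Surj(n, m) xⁿ / n! = (exp x - 1) ^ m`. For
`x = -log (1 - r)` the `m`-th row of the double series therefore sums to `qᵐ` with
`q = t r / (1 - r)`, so the double series of nonnegative terms converges iff the geometric series
in `q` does, i.e. iff `r < 1 / (t + 1)`, and its sum is `1 / (1 - q)`.
-/

open Finset Function

theorem surj_le_pow (n m : ℕ) : Surj n m ≤ m ^ n := by
  simpa [Surj] using Finite.card_subtype_le (fun f : Fin n → Fin m => Surjective f)

theorem natCard_surjective_congr {α α' β β' : Type*} (e₁ : α ≃ α') (e₂ : β ≃ β') :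
    Nat.card {f : α → β // Surjective f} = Nat.card {f : α' → β' // Surjective f} :=
  Nat.card_congr <| (e₁.arrowCongr e₂).subtypeEquiv fun f => by
    show _ ↔ Surjective (e₂ ∘ f ∘ e₁.symm)
    rw [Equiv.comp_surjective, Equiv.surjective_comp]

theorem natCard_surjective_eq_surj (α β : Type*) [Finite α] [Finite β] :
    Nat.card {f : α → β // Surjective f} = Surj (Nat.card α) (Nat.card β) :=
  natCard_surjective_congr (Finite.equivFin α) (Finite.equivFin β)

def imageEqEquivSurjective {α β : Type*} [Fintype α] [DecidableEq β] (S : Finset β) :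
    {f : α → β // univ.image f = S} ≃ {g : α → S // Surjective g} where
  toFun | ⟨f, hf⟩ => ⟨fun a => ⟨f a, hf ▸ mem_image_of_mem f (mem_univ a)⟩,
    fun ⟨b, hb⟩ => by
      obtain ⟨a, -, rfl⟩ := mem_image.1 (hf ▸ hb)
      exact ⟨a, rfl⟩⟩
  invFun g := ⟨fun a => g.1 a, by
    ext b
    refine ⟨fun hb => ?_, fun hb => ?_⟩
    · obtain ⟨a, -, rfl⟩ := mem_image.1 hb
      exact (g.1 a).2
    · obtain ⟨a, ha⟩ := g.2 ⟨b, hb⟩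
      exact mem_image.2 ⟨a, mem_univ a, congrArg Subtype.val ha⟩⟩
  left_inv | ⟨_, _⟩ => rfl
  right_inv _ := rfl

theorem natCard_image_eq {α β : Type*} [Fintype α] [DecidableEq β] (S : Finset β) :
    Nat.card {f : α → β // univ.image f = S} = Surj (Nat.card α) S.card := by
  rw [Nat.card_congr (imageEqEquivSurjective S), natCard_surjective_eq_surj,
    Nat.card_eq_finsetCard]

theorem pow_eq_sum_choose_mul_surj (n m : ℕ) :
    m ^ n = ∑ k ∈ range (m + 1), m.choose k * Surj n k := by
  classical
  have hfiber (S : Finset (Fin m)) :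
      #{f : Fin n → Fin m | univ.image f = S} = Surj n #S := by
    simpa [Nat.card_eq_fintype_card, Fintype.card_subtype] using
      natCard_image_eq (α := Fin n) S
  calc m ^ n = #(univ : Finset (Fin n → Fin m)) := by simp
    _ = ∑ S : Finset (Fin m), Surj n #S := by
      rw [card_eq_sum_card_fiberwise (t := univ) fun f _ => mem_univ (univ.image f)]
      exact sum_congr rfl fun S _ => hfiber S
    _ = ∑ k ∈ range (m + 1), m.choose k * Surj n k := by
      rw [← powerset_univ, sum_powerset]
      simp [sum_powersetCard]

open Real Nat

theorem summable_surj_mul_pow_div_factorial (m : ℕ) (x : ℝ) :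
    Summable fun n => (Surj n m : ℝ) * x ^ n / n ! := by
  refine .of_norm_bounded (summable_pow_div_factorial (m * |x|)) fun n => ?_
  rw [norm_div, norm_mul, norm_natCast, norm_natCast, norm_pow, norm_eq_abs, mul_pow]
  gcongr
  exact_mod_cast surj_le_pow n m

theorem eq_of_forall_sum_choose_nsmul_eq {M : Type*} [AddCancelCommMonoid M] {a b : ℕ → M}
    (h : ∀ m, ∑ k ∈ range (m + 1), m.choose k • a k =
      ∑ k ∈ range (m + 1), m.choose k • b k) :
    a = b := by
  funext m
  induction m using Nat.strong_induction_on with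
  | _ m ih =>
    have hm := h m
    rw [sum_range_succ, sum_range_succ, choose_self, one_smul, one_smul,
      sum_congr rfl fun k hk => by rw [ih k (mem_range.1 hk)]] at hm
    exact add_left_cancel hm

theorem exp_nat_mul_eq_sum_choose_mul_tsum_surj (m : ℕ) (x : ℝ) :
    exp (m * x) = ∑ k ∈ range (m + 1), m.choose k * ∑' n, (Surj n k : ℝ) * x ^ n / n ! := by
  have hpow (n : ℕ) : (m * x) ^ n / n ! =
      ∑ k ∈ range (m + 1), m.choose k * ((Surj n k : ℝ) * x ^ n / n !) := by
    have hm : (m : ℝ) ^ n = ∑ k ∈ range (m + 1), (m.choose k : ℝ) * Surj n k := by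
      exact_mod_cast pow_eq_sum_choose_mul_surj n m
    rw [mul_pow, hm, sum_mul, sum_div]
    exact sum_congr rfl fun k _ => by ring
  rw [exp_eq_exp_ℝ, NormedSpace.exp_eq_tsum_div]
  beta_reduce
  rw [tsum_congr hpow,
    Summable.tsum_finsetSum fun k _ => (summable_surj_mul_pow_div_factorial k x).mul_left _]
  exact sum_congr rfl fun k _ => tsum_mul_left

theorem exp_nat_mul_eq_sum_choose_mul_exp_sub_one_pow (m : ℕ) (x : ℝ) :
    exp (m * x) = ∑ k ∈ range (m + 1), m.choose k * (exp x - 1) ^ k := by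
  rw [exp_nat_mul, ← sub_add_cancel (exp x) 1, add_pow, add_sub_cancel_right]
  exact sum_congr rfl fun k _ => by ring

theorem tsum_surj_mul_pow_div_factorial (m : ℕ) (x : ℝ) :
    ∑' n, (Surj n m : ℝ) * x ^ n / n ! = (exp x - 1) ^ m := by
  refine congrFun (eq_of_forall_sum_choose_nsmul_eq
    (a := fun k => ∑' n, (Surj n k : ℝ) * x ^ n / n !) (b := fun k => (exp x - 1) ^ k)
    fun m => ?_) m
  simp only [nsmul_eq_mul, ← exp_nat_mul_eq_sum_choose_mul_tsum_surj,
    ← exp_nat_mul_eq_sum_choose_mul_exp_sub_one_pow]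

section GeometricRows

variable {f : ℕ × ℕ → ℝ} {q : ℝ} (hf : 0 ≤ f)
  (hrow_tsum : ∀ m, ∑' n, f (m, n) = q ^ m)
include hf hrow_tsum

theorem nonneg_of_tsum_row_eq_pow : 0 ≤ q :=
  pow_one q ▸ hrow_tsum 1 ▸ tsum_nonneg fun n => hf (1, n)

theorem summable_iff_of_tsum_row_eq_pow (hrow : ∀ m, Summable fun n => f (m, n)) :
    Summable f ↔ q < 1 := by
  simp only [summable_prod_of_nonneg hf, hrow, hrow_tsum, implies_true, true_and,
    summable_geometric_iff_norm_lt_one,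
    norm_of_nonneg (nonneg_of_tsum_row_eq_pow hf hrow_tsum)]

theorem tsum_eq_of_tsum_row_eq_pow (hrow : ∀ m, Summable fun n => f (m, n)) (hq : q < 1) :
    ∑' p, f p = (1 - q)⁻¹ := by
  rw [((summable_iff_of_tsum_row_eq_pow hf hrow_tsum hrow).2 hq).tsum_prod' hrow,
    tsum_congr hrow_tsum, tsum_geometric_of_lt_one (nonneg_of_tsum_row_eq_pow hf hrow_tsum) hq]

end GeometricRows

/-- For every real `t ≥ 0` and `0 ≤ r < 1`, the double series with nonnegative terms
`Σ_{m,n} t^m·Surj(n,m)·(−log(1−r))^n/n!` converges iff `r < 1/(t+1)`, and when it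
converges its sum equals `(1−r)/(1−(t+1)r)`. -/
theorem stmt4 (t r : ℝ) (ht : 0 ≤ t) (hr0 : 0 ≤ r) (hr1 : r < 1) :
    (Summable (fun p : ℕ × ℕ =>
        t ^ p.1 * (Surj p.2 p.1 : ℝ) * (-Real.log (1 - r)) ^ p.2 / (Nat.factorial p.2 : ℝ))
      ↔ r < 1 / (t + 1)) ∧
    (r < 1 / (t + 1) →
      ∑' p : ℕ × ℕ,
        t ^ p.1 * (Surj p.2 p.1 : ℝ) * (-Real.log (1 - r)) ^ p.2 / (Nat.factorial p.2 : ℝ)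
        = (1 - r) / (1 - (t + 1) * r)) := by
  have h1r : 0 < 1 - r := by linarith
  set x := -log (1 - r)
  have hx : 0 ≤ x := neg_nonneg.2 (log_nonpos h1r.le (by linarith))
  have hexp : exp x - 1 = r / (1 - r) := by
    rw [exp_neg, exp_log h1r]
    field_simp
    ring
  have hf : 0 ≤ fun p : ℕ × ℕ => t ^ p.1 * (Surj p.2 p.1 : ℝ) * x ^ p.2 / p.2 ! :=
    fun p => by positivity
  have hrow (m : ℕ) : (fun n => t ^ m * (Surj n m : ℝ) * x ^ n / n !) =
      fun n => t ^ m * ((Surj n m : ℝ) * x ^ n / n !) := by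
    simp only [mul_assoc, mul_div_assoc]
  have hsumm (m : ℕ) : Summable fun n => t ^ m * (Surj n m : ℝ) * x ^ n / n ! :=
    hrow m ▸ (summable_surj_mul_pow_div_factorial m x).mul_left (t ^ m)
  have htsum (m : ℕ) :
      ∑' n, t ^ m * (Surj n m : ℝ) * x ^ n / n ! = (t * (r / (1 - r))) ^ m := by
    rw [hrow, tsum_mul_left, tsum_surj_mul_pow_div_factorial, hexp, mul_pow]
  have hq : t * (r / (1 - r)) < 1 ↔ r < 1 / (t + 1) := by
    rw [mul_div_assoc', div_lt_one h1r, lt_div_iff₀ (by linarith)]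
    constructor <;> intro h <;> linarith
  refine ⟨(summable_iff_of_tsum_row_eq_pow hf htsum hsumm).trans hq, fun h => ?_⟩
  rw [tsum_eq_of_tsum_row_eq_pow hf htsum hsumm (hq.2 h)]
  field_simp
  ring
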